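/- Let n ≥ 4, let B be the (n−1)×(n−1) circulant matrix circ(3,−1,0,…,0,−1), and let L be the n×n block matrix L = [[n−1, −𝟏ᵀ],[−𝟏, B]] (the Laplacian matrix of the wheel graph W_n). Let C = circ(1,0,…,0,−1) of order n−1, X = (CCᵀ + I_{n−1})⁻¹(J_{n−1} − n·I_{n−1}), and H = (1/n²) · [[n−1, −𝟏ᵀ],[−𝟏, −J_{n−1} − nX]]. Then H is the Moore–Penrose inverse of L, i.e. L H L = L, H L H = H, (L H)ᵀ = L H, and (H L)ᵀ = H L. -/

import Mathlib

open Matrix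

noncomputable section

/-- The circulant matrix of order `m` with defining vector `v`:
its `(i,j)` entry is `v ((j - i) mod m)`. -/
def circ {m : ℕ} (v : Fin m → ℝ) : Matrix (Fin m) (Fin m) ℝ :=
  Matrix.of fun i j => v (j - i)

/-- The `m × m` all-ones matrix. -/
def Jmat (m : ℕ) : Matrix (Fin m) (Fin m) ℝ := Matrix.of fun _ _ => 1

/-
Let `E` be the all-ones matrix of order `n` and `J` that of order `n - 1`. Then `L * E = 0`, and
`L + E = diag(n, B + J)` is invertible with inverse `G = diag(1/n, B⁻¹ - J/n)`, since `B` has row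
sums one. For any symmetric `L` with `L * E = 0` and `L + E` invertible, `G - E/n²` is the
Moore–Penrose inverse of `L`: multiplying it by `L` on either side gives the orthogonal projection
`1 - E/n`, which fixes `L` and `G - E/n²`. With `X = J - n B⁻¹` the given `H` is exactly
`G - E/n²`. Finally `C = 1 - S` for the cyclic shift `S`, and `S Sᵀ = 1` gives
`C Cᵀ + 1 = 3 - S - Sᵀ = B`, so `B` is symmetric positive definite.
-/

section Semiring
variable {G R : Type*} [AddCommGroup G] [Fintype G] [DecidableEq G] [Semiring R]

theorem circulant_single_mul_circulant_single (a b : G) :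
    circulant (Pi.single a (1 : R)) * circulant (Pi.single b 1) =
      circulant (Pi.single (a + b) 1) := by
  rw [circulant_mul]
  congr 1
  ext i
  simp [circulant_apply, Pi.single_apply, sub_eq_iff_eq_add]

omit [Fintype G] in
theorem transpose_circulant_single (a : G) :
    (circulant (Pi.single a (1 : R)))ᵀ = circulant (Pi.single (-a) 1) := by
  rw [transpose_circulant]
  congr 1
  ext i
  simp [Pi.single_apply, neg_eq_iff_eq_neg]

omit [DecidableEq G] in
theorem circulant_mul_ones (v : G → R) :
    circulant v * of (fun _ _ => 1) = of fun _ _ => ∑ k, v k := by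
  ext i j
  simpa [mul_apply, circulant_apply] using Fintype.sum_equiv (Equiv.subLeft i) _ _ (fun _ => rfl)

theorem circulant_single_mul_ones (a : G) :
    circulant (Pi.single a (1 : R)) * of (fun _ _ => 1) = of fun _ _ => 1 := by
  simp [circulant_mul_ones]

end Semiring

section Ring
variable {G R : Type*} [AddCommGroup G] [Fintype G] [DecidableEq G] [Ring R]

theorem one_sub_circulant_single_mul_transpose_add_one (a : G) :
    (1 - circulant (Pi.single a (1 : R))) * (1 - circulant (Pi.single a 1))ᵀ + 1 =
      3 • 1 - circulant (Pi.single a 1) - circulant (Pi.single (-a) 1) := by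
  rw [transpose_sub, transpose_one, transpose_circulant_single, sub_mul, mul_sub, mul_sub,
    circulant_single_mul_circulant_single, add_neg_cancel, circulant_single_one]
  noncomm_ring

theorem three_sub_circulant_single_sub_circulant_single_mul_ones (a : G) :
    (3 • 1 - circulant (Pi.single a (1 : R)) - circulant (Pi.single (-a) 1)) * of (fun _ _ => 1) =
      of fun _ _ => 1 := by
  rw [sub_mul, sub_mul, circulant_single_mul_ones, circulant_single_mul_ones, smul_mul, one_mul]
  abel

end Ring

theorem isUnit_det_mul_transpose_add_one {ι : Type*} [Fintype ι] [DecidableEq ι]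
    (C : Matrix ι ι ℝ) : IsUnit (C * Cᵀ + 1).det := by
  have hC : (C * Cᵀ).PosSemidef := by
    simpa only [conjTranspose_eq_transpose_of_trivial] using posSemidef_self_mul_conjTranspose C
  exact (isUnit_iff_isUnit_det _).mp (PosDef.posSemidef_add hC PosDef.one).isUnit

section MoorePenrose
variable {ι R K : Type*} [Fintype ι] [DecidableEq ι]

theorem ones_mul_ones {l m n : Type*} [Fintype m] [NonAssocSemiring R] :
    (of fun _ _ => 1 : Matrix l m R) * (of fun _ _ => 1 : Matrix m n R) =
      (Fintype.card m : R) • of fun _ _ => 1 := by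
  ext
  simp [mul_apply]

-- The real Penrose equations; over `ℂ` one would use `conjTranspose` instead of `transpose`.
def IsMoorePenroseInverse [CommRing R] {m n : Type*} [Fintype m] [Fintype n]
    (A : Matrix m n R) (A' : Matrix n m R) : Prop :=
  A * A' * A = A ∧ A' * A * A' = A' ∧ (A * A')ᵀ = A * A' ∧ (A' * A)ᵀ = A' * A

theorem isMoorePenroseInverse_of_mul_eq_one_sub [CommRing R] {L H P : Matrix ι ι R}
    (hL : Lᵀ = L) (hH : Hᵀ = H) (hP : Pᵀ = P) (hLH : L * H = 1 - P) (hPL : P * L = 0)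
    (hHP : H * P = 0) : IsMoorePenroseInverse L H := by
  have hHL : H * L = 1 - P := by
    rw [← hL, ← hH, ← transpose_mul, hLH, transpose_sub, transpose_one, hP]
  refine ⟨?_, ?_, ?_, ?_⟩
  · rw [hLH, sub_mul, one_mul, hPL, sub_zero]
  · rw [mul_assoc, hLH, mul_sub, mul_one, hHP, sub_zero]
  · rw [hLH, transpose_sub, transpose_one, hP]
  · rw [hHL, transpose_sub, transpose_one, hP]

theorem isMoorePenroseInverse_of_mul_add_eq_one [Field K] {L G E : Matrix ι ι K} {N : K}
    (hN : N ≠ 0) (hL : Lᵀ = L) (hE : Eᵀ = E) (hEE : E * E = N • E) (hLE : L * E = 0)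
    (hG : G * (L + E) = 1) : IsMoorePenroseInverse L (G - (N ^ 2)⁻¹ • E) := by
  have hEL : E * L = 0 := by rw [← hE, ← hL, ← transpose_mul, hLE, transpose_zero]
  have hG' : (L + E) * G = 1 := mul_eq_one_comm.mp hG
  have hGE : G * E = N⁻¹ • E :=
    calc G * E = N⁻¹ • (G * (N • E)) := by
          rw [Matrix.mul_smul, smul_smul, inv_mul_cancel₀ hN, one_smul]
      _ = N⁻¹ • (G * ((L + E) * E)) := by rw [add_mul, hLE, zero_add, hEE]
      _ = N⁻¹ • E := by rw [← mul_assoc, hG, one_mul]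
  have hEG : E * G = N⁻¹ • E :=
    calc E * G = N⁻¹ • ((N • E) * G) := by
          rw [Matrix.smul_mul, smul_smul, inv_mul_cancel₀ hN, one_smul]
      _ = N⁻¹ • ((E * (L + E)) * G) := by rw [mul_add, hEL, zero_add, hEE]
      _ = N⁻¹ • E := by rw [mul_assoc, hG', mul_one]
  have hGt : Gᵀ = G :=
    calc Gᵀ = Gᵀ * ((L + E) * G) := by rw [hG', mul_one]
      _ = ((L + E)ᵀ * G)ᵀ * G := by rw [transpose_mul, transpose_transpose, mul_assoc]
      _ = G := by rw [transpose_add, hL, hE, hG', transpose_one, one_mul]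
  apply isMoorePenroseInverse_of_mul_eq_one_sub (P := N⁻¹ • E) hL
  · rw [transpose_sub, transpose_smul, hGt, hE]
  · rw [transpose_smul, hE]
  · calc L * (G - (N ^ 2)⁻¹ • E) = ((L + E) - E) * (G - (N ^ 2)⁻¹ • E) := by
          rw [add_sub_cancel_right]
      _ = 1 - N⁻¹ • E := by
        rw [sub_mul, mul_sub, mul_sub, hG', Matrix.mul_smul, add_mul, hLE, zero_add, hEE, hEG,
          Matrix.mul_smul, hEE]
        abel
  · rw [Matrix.smul_mul, hEL, smul_zero]
  · rw [Matrix.mul_smul, sub_mul, hGE, Matrix.smul_mul, hEE, smul_smul, ← sub_smul,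
      show N⁻¹ - (N ^ 2)⁻¹ * N = 0 by field_simp; ring, zero_smul, smul_zero]

theorem isMoorePenroseInverse_coneLaplacian [Field K] {N : K} (hN : N = Fintype.card ι + 1)
    (hN0 : N ≠ 0) {B : Matrix ι ι K} (hBt : Bᵀ = B)
    (hBJ : B * of (fun _ _ => 1) = of fun _ _ => 1) (hB : IsUnit B.det) :
    IsMoorePenroseInverse
      (fromBlocks (of fun _ _ => N - 1 : Matrix (Fin 1) (Fin 1) K) (of fun _ _ => -1)
        (of fun _ _ => -1) B)
      ((1 / N ^ 2) • fromBlocks (of fun _ _ => N - 1 : Matrix (Fin 1) (Fin 1) K)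
        (of fun _ _ => -1) (of fun _ _ => -1)
        (-(of fun _ _ => 1) - N • (B⁻¹ * (of (fun _ _ => 1) - N • 1)))) := by
  set J : Matrix ι ι K := of fun _ _ => 1
  set E : Matrix (Fin 1 ⊕ ι) (Fin 1 ⊕ ι) K := of fun _ _ => 1
  set L := fromBlocks (of fun _ _ => N - 1 : Matrix (Fin 1) (Fin 1) K) (of fun _ _ => -1)
    (of fun _ _ => -1) B
  have hJt : Jᵀ = J := rfl
  have hJB : J * B = J := by rw [← hJt, ← hBt, ← transpose_mul, hBJ]
  have hBiJ : B⁻¹ * J = J := by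
    conv_lhs => rw [← hBJ, ← mul_assoc, nonsing_inv_mul _ hB, one_mul]
  have hJJ : J * J = (N - 1) • J := by rw [ones_mul_ones, hN, add_sub_cancel_right]
  have hEE : E * E = N • E := by
    rw [ones_mul_ones, hN, Fintype.card_sum, Fintype.card_fin, Nat.cast_add, Nat.cast_one,
      add_comm]
  have hLE : L * E = 0 := by
    have hrow : ∀ i, ∑ k, B i k = 1 := fun i => by
      simpa [J, mul_apply] using congrFun (congrFun hBJ i) i
    ext (i | i) (j | j) <;> simp [L, E, mul_apply, Fintype.sum_sum_type, hrow, hN]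
  have hG : fromBlocks (of fun _ _ => N⁻¹) 0 0 (B⁻¹ - N⁻¹ • J) * (L + E) = 1 := by
    have hD : L + E = fromBlocks (of fun _ _ => N) 0 0 (B + J) := by
      ext (i | i) (j | j) <;> simp [L, E, J]
    have hBJinv : (B⁻¹ - N⁻¹ • J) * (B + J) = 1 := by
      rw [sub_mul, mul_add, nonsing_inv_mul _ hB, hBiJ, Matrix.smul_mul, mul_add, hJB, hJJ,
        show J + (N - 1) • J = N • J by module, smul_smul, inv_mul_cancel₀ hN0, one_smul,
        add_sub_cancel_right]
    rw [hD, fromBlocks_multiply, ← fromBlocks_one]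
    simp only [Matrix.zero_mul, Matrix.mul_zero, add_zero, zero_add, hBJinv]
    congr
    ext i j
    obtain rfl := Subsingleton.elim i j
    simp [mul_apply, hN0]
  convert isMoorePenroseInverse_of_mul_add_eq_one hN0 _ rfl hEE hLE hG using 1
  · rw [mul_sub, hBiJ, Matrix.mul_smul, mul_one]
    ext (i | i) (j | j) <;> simp [E, J] <;> field_simp
    ring
  · rw [fromBlocks_transpose, hBt]
    rfl

end MoorePenrose

theorem circ_eq_transpose_circulant {m : ℕ} (v : Fin m → ℝ) : circ v = (circulant v)ᵀ := rfl

section Wheel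
variable (m : ℕ)

-- The defining vectors of `C` and `B` in the theorem, for `n = m + 4`.
def cycleIncidenceVec : Fin (m + 3) → ℝ :=
  fun k => if k.val = 0 then 1 else if k.val = m + 2 then -1 else 0

def cycleLaplacianAddOneVec : Fin (m + 3) → ℝ :=
  fun k => if k.val = 0 then 3 else if k.val = 1 ∨ k.val = m + 2 then -1 else 0

theorem circ_cycleIncidenceVec : circ (cycleIncidenceVec m) = 1 - circulant (Pi.single 1 1) := by
  have hv : cycleIncidenceVec m = Pi.single 0 1 - Pi.single (-1) 1 := by
    ext k
    simp only [cycleIncidenceVec, Pi.sub_apply, Pi.single_apply, Fin.ext_iff, Fin.val_zero,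
      Fin.coe_neg_one]
    split_ifs <;> first | omega | norm_num
  rw [circ_eq_transpose_circulant, hv, circulant_sub, circulant_single_one, transpose_sub,
    transpose_one, transpose_circulant_single, neg_neg]

theorem circ_cycleLaplacianAddOneVec :
    circ (cycleLaplacianAddOneVec m) =
      3 • 1 - circulant (Pi.single 1 1) - circulant (Pi.single (-1) 1) := by
  have hv : cycleLaplacianAddOneVec m = 3 • Pi.single 0 1 - Pi.single 1 1 - Pi.single (-1) 1 := by
    ext k
    simp only [cycleLaplacianAddOneVec, Pi.sub_apply, Pi.smul_apply, Pi.single_apply, Fin.ext_iff,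
      Fin.val_zero, Fin.val_one, Fin.coe_neg_one]
    split_ifs <;> first | omega | norm_num
  rw [circ_eq_transpose_circulant, hv, circulant_sub, circulant_sub, circulant_smul,
    circulant_single_one, transpose_sub, transpose_sub, transpose_smul, transpose_one,
    transpose_circulant_single, transpose_circulant_single, neg_neg]
  abel

theorem circ_cycleIncidenceVec_mul_transpose_add_one :
    circ (cycleIncidenceVec m) * (circ (cycleIncidenceVec m))ᵀ + 1 =
      circ (cycleLaplacianAddOneVec m) := by
  rw [circ_cycleIncidenceVec, circ_cycleLaplacianAddOneVec]
  exact one_sub_circulant_single_mul_transpose_add_one 1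

theorem circ_cycleLaplacianAddOneVec_mul_ones :
    circ (cycleLaplacianAddOneVec m) * Jmat (m + 3) = Jmat (m + 3) := by
  rw [circ_cycleLaplacianAddOneVec]
  exact three_sub_circulant_single_sub_circulant_single_mul_ones 1

end Wheel

theorem wheel_laplacian_moore_penrose (n : ℕ) (hn : 4 ≤ n)
    (B C X : Matrix (Fin (n-1)) (Fin (n-1)) ℝ)
    (hB : B = circ (fun k => if k.val = 0 then (3:ℝ) else
      if k.val = 1 ∨ k.val = n - 2 then -1 else 0))
    (hC : C = circ (fun k => if k.val = 0 then (1:ℝ) else if k.val = n - 2 then -1 else 0))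
    (hX : X = (C * Cᵀ + 1)⁻¹ * (Jmat (n-1) - (n:ℝ) • (1 : Matrix (Fin (n-1)) (Fin (n-1)) ℝ)))
    (L : Matrix (Fin 1 ⊕ Fin (n-1)) (Fin 1 ⊕ Fin (n-1)) ℝ)
    (hL : L = Matrix.fromBlocks (Matrix.of fun _ _ => (n:ℝ) - 1) (Matrix.of fun _ _ => -1)
      (Matrix.of fun _ _ => -1) B)
    (H : Matrix (Fin 1 ⊕ Fin (n-1)) (Fin 1 ⊕ Fin (n-1)) ℝ)
    (hH : H = (1 / (n:ℝ)^2) •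
      Matrix.fromBlocks (Matrix.of fun _ _ => (n:ℝ) - 1) (Matrix.of fun _ _ => -1)
        (Matrix.of fun _ _ => -1) (-(Jmat (n-1)) - (n:ℝ) • X)) :
    L * H * L = L ∧ H * L * H = H ∧ (L * H)ᵀ = L * H ∧ (H * L)ᵀ = H * L := by
  obtain ⟨m, rfl⟩ : ∃ m, n = m + 4 := ⟨n - 4, by omega⟩
  have hBC : C * Cᵀ + 1 = B := by
    subst hB hC
    exact circ_cycleIncidenceVec_mul_transpose_add_one m
  have hBJ : B * Jmat (m + 4 - 1) = Jmat (m + 4 - 1) := by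
    subst hB
    exact circ_cycleLaplacianAddOneVec_mul_ones m
  subst hX hL hH
  rw [hBC]
  exact isMoorePenroseInverse_coneLaplacian (by simp; ring) (by positivity)
    (by rw [← hBC, transpose_add, transpose_mul, transpose_transpose, transpose_one]) hBJ
    (hBC ▸ isUnit_det_mul_transpose_add_one C)
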